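/- arXiv:2305.18218 — 6 statements merged into one kernel-verified Lean document; each statement's English description precedes it below -/
import Mathlib

section
/- Let δ be any coloring of the ten 3-element subsets of {1,2,3,4,5} (equivalently of the points v_S ∈ Q₅ with |S| = 3). Suppose that (a) no two sets S, T with |S Δ T| = 2 (distance-1 pairs) receive the same color, and (b) no four sets forming a unit square in Q₅ receive four pairwise distinct colors. Then a contradiction follows; i.e., every such coloring admits either a monochromatic distance-1 pair or a rainbow unit square among the points {v_S : |S| = 3}. -/
open scoped symmDiff

/-- For `S ⊆ Fin 5`, the point of `Q₅` with coordinate `1/√2` on `S` and `0` elsewhere. -/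
noncomputable def vS (S : Finset (Fin 5)) : EuclideanSpace ℝ (Fin 5) :=
  WithLp.toLp 2 (fun i => if i ∈ S then 1 / Real.sqrt 2 else 0)

/-!
Identify a 3-set `S ⊆ Fin 5` with the edge `Sᶜ` of `K₅`. Two 3-sets are at distance 1 iff their
edges share a vertex, and unit squares are exactly the 4-cycles of `K₅`; so `δ` is a proper edge
colouring of `K₅`, and every non-rainbow 4-cycle has a pair of opposite edges of the same colour.
Applying this to four 4-cycles through the edge `{1, 3}` (the set `{0, 2, 4}`), each branch of the
resulting case split produces two edges with a common vertex and the same colour.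
-/

open Finset

lemma dist_vS (S T : Finset (Fin 5)) : dist (vS S) (vS T) = Real.sqrt (#(S ∆ T) / 2) := by
  rw [EuclideanSpace.dist_eq]
  congr 1
  have hcoord : ∀ i, dist (vS S i) (vS T i) ^ 2 = if i ∈ S ∆ T then (1 : ℝ) / 2 else 0 := by
    intro i
    have hsqrt : (0 : ℝ) < Real.sqrt 2 := by positivity
    by_cases hS : i ∈ S <;> by_cases hT : i ∈ T <;>
      simp [vS, hS, hT, mem_symmDiff, Real.dist_eq, abs_of_pos, hsqrt]
  rw [sum_congr rfl fun i _ => hcoord i, sum_ite_mem, univ_inter, sum_const, nsmul_eq_mul]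
  ring

abbrev IsUnitSquare (S₁ S₂ S₃ S₄ : Finset (Fin 5)) : Prop :=
  #S₁ = 3 ∧ #S₂ = 3 ∧ #S₃ = 3 ∧ #S₄ = 3 ∧
    #(S₁ ∆ S₂) = 2 ∧ #(S₂ ∆ S₃) = 2 ∧ #(S₃ ∆ S₄) = 2 ∧ #(S₄ ∆ S₁) = 2 ∧
    #(S₁ ∆ S₃) = 4 ∧ #(S₂ ∆ S₄) = 4

def HasRainbowUnitSquare {C : Type*} (δ : Finset (Fin 5) → C) : Prop :=
  ∃ S₁ S₂ S₃ S₄ : Finset (Fin 5),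
    S₁.card = 3 ∧ S₂.card = 3 ∧ S₃.card = 3 ∧ S₄.card = 3 ∧
    dist (vS S₁) (vS S₂) = 1 ∧ dist (vS S₂) (vS S₃) = 1 ∧
    dist (vS S₃) (vS S₄) = 1 ∧ dist (vS S₄) (vS S₁) = 1 ∧
    dist (vS S₁) (vS S₃) = Real.sqrt 2 ∧ dist (vS S₂) (vS S₄) = Real.sqrt 2 ∧
    δ S₁ ≠ δ S₂ ∧ δ S₁ ≠ δ S₃ ∧ δ S₁ ≠ δ S₄ ∧
    δ S₂ ≠ δ S₃ ∧ δ S₂ ≠ δ S₄ ∧ δ S₃ ≠ δ S₄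

lemma IsUnitSquare.color_eq_or_color_eq {C : Type*} {δ : Finset (Fin 5) → C}
    (ha : ∀ S T : Finset (Fin 5), #S = 3 → #T = 3 → #(S ∆ T) = 2 → δ S ≠ δ T)
    (hb : ¬ HasRainbowUnitSquare δ) {S₁ S₂ S₃ S₄ : Finset (Fin 5)}
    (h : IsUnitSquare S₁ S₂ S₃ S₄) : δ S₁ = δ S₃ ∨ δ S₂ = δ S₄ := by
  obtain ⟨c₁, c₂, c₃, c₄, e₁₂, e₂₃, e₃₄, e₄₁, d₁₃, d₂₄⟩ := h
  have unit {S T : Finset (Fin 5)} (h : #(S ∆ T) = 2) : dist (vS S) (vS T) = 1 := by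
    rw [dist_vS, h]; norm_num
  have diag {S T : Finset (Fin 5)} (h : #(S ∆ T) = 4) : dist (vS S) (vS T) = Real.sqrt 2 := by
    rw [dist_vS, h]; norm_num
  by_contra! hne
  exact hb ⟨S₁, S₂, S₃, S₄, c₁, c₂, c₃, c₄, unit e₁₂, unit e₂₃, unit e₃₄, unit e₄₁,
    diag d₁₃, diag d₂₄, ha _ _ c₁ c₂ e₁₂, hne.1, (ha _ _ c₄ c₁ e₄₁).symm,
    ha _ _ c₂ c₃ e₂₃, hne.2, ha _ _ c₃ c₄ e₃₄⟩

theorem stmt7 (C : Type*) (δ : Finset (Fin 5) → C)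
    (ha : ∀ S T : Finset (Fin 5), S.card = 3 → T.card = 3 → (S ∆ T).card = 2 → δ S ≠ δ T)
    (hb : ¬ ∃ S₁ S₂ S₃ S₄ : Finset (Fin 5),
      S₁.card = 3 ∧ S₂.card = 3 ∧ S₃.card = 3 ∧ S₄.card = 3 ∧
      dist (vS S₁) (vS S₂) = 1 ∧ dist (vS S₂) (vS S₃) = 1 ∧
      dist (vS S₃) (vS S₄) = 1 ∧ dist (vS S₄) (vS S₁) = 1 ∧
      dist (vS S₁) (vS S₃) = Real.sqrt 2 ∧ dist (vS S₂) (vS S₄) = Real.sqrt 2 ∧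
      δ S₁ ≠ δ S₂ ∧ δ S₁ ≠ δ S₃ ∧ δ S₁ ≠ δ S₄ ∧
      δ S₂ ≠ δ S₃ ∧ δ S₂ ≠ δ S₄ ∧ δ S₃ ≠ δ S₄) :
    False := by
  have adj {S T : Finset (Fin 5)} (h : #S = 3 ∧ #T = 3 ∧ #(S ∆ T) = 2) : δ S ≠ δ T :=
    ha S T h.1 h.2.1 h.2.2
  have square {S₁ S₂ S₃ S₄ : Finset (Fin 5)} (h : IsUnitSquare S₁ S₂ S₃ S₄) :
      δ S₁ = δ S₃ ∨ δ S₂ = δ S₄ :=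
    h.color_eq_or_color_eq ha hb
  rcases square (S₁ := {0, 1, 2}) (S₂ := {0, 2, 4}) (S₃ := {2, 3, 4}) (S₄ := {1, 2, 3})
    (by decide) with h₁ | h₁
  · rcases square (S₁ := {0, 1, 3}) (S₂ := {0, 1, 2}) (S₃ := {0, 2, 4}) (S₄ := {0, 3, 4})
      (by decide) with h₂ | h₂
    · rcases square (S₁ := {0, 2, 4}) (S₂ := {0, 3, 4}) (S₃ := {1, 3, 4}) (S₄ := {1, 2, 4})
        (by decide) with h₀ | h₀
      · exact adj (by decide) (h₂.trans h₀)
      · rcases square (S₁ := {0, 2, 3}) (S₂ := {0, 2, 4}) (S₃ := {1, 2, 4}) (S₄ := {1, 2, 3})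
          (by decide) with h₃ | h₃
        · exact adj (by decide) (h₃.trans h₀.symm)
        · exact adj (by decide) (h₂.trans h₃)
    · exact adj (by decide) (h₁.symm.trans h₂)
  · rcases square (S₁ := {0, 2, 4}) (S₂ := {0, 3, 4}) (S₃ := {1, 3, 4}) (S₄ := {1, 2, 4})
      (by decide) with h₀ | h₀
    · exact adj (by decide) (h₁.symm.trans h₀)
    · rcases square (S₁ := {0, 1, 3}) (S₂ := {0, 1, 2}) (S₃ := {0, 2, 4}) (S₄ := {0, 3, 4})
        (by decide) with h₂ | h₂
      · exact adj (by decide) (h₂.trans h₁)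
      · exact adj (by decide) (h₂.trans h₀)
end

section
/- Let X ⊆ ℝⁿ be a finite configuration with diameter b and box-width a > 0, and let P be a configuration of t points with diameter at most a(t−2). Color ℝⁿ with ⌈b/a⌉ + 1 colors by coloring the block [(i−1)a, ia) × ℝⁿ⁻¹ with color i mod (⌈b/a⌉+1). Then under this coloring there is neither a monochromatic isometric copy of X nor a rainbow isometric copy of P. -/
/-!
Two points of a copy of `X` are at distance at most `b`, so their first coordinates differ by at
most `b` and their slab indices `⌊x₀ / a⌋` by at most `⌈b / a⌉`, which is less than the number of
colors. Equal colors therefore force equal slab indices: a monochromatic copy of `X` lies in a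
half-open slab of width `a`, hence, `X` being finite, in a closed slab of width `< a`, contradicting
the box-width. In a copy of `P` the slab indices take at most `t - 1` consecutive values, so two of
its `t` points share a slab, and with it a color.
-/

open Metric

lemma floor_div_sub_floor_div_le_ceil {a b p q : ℝ} (ha : 0 < a) (h : p - q ≤ b) :
    ⌊p / a⌋ - ⌊q / a⌋ ≤ ⌈b / a⌉ := by
  have : ⌊p / a⌋ ≤ ⌊q / a + ⌈b / a⌉⌋ := by
    apply Int.floor_le_floor
    calc p / a ≤ q / a + b / a := by rw [← add_div]; gcongr; linarith
      _ ≤ q / a + ⌈b / a⌉ := by gcongr; exact Int.le_ceil _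
  rw [Int.floor_add_intCast] at this
  omega

lemma floor_div_eq_of_modEq {a b p q : ℝ} (ha : 0 < a) (h : |p - q| ≤ b)
    (hmod : ⌊p / a⌋ ≡ ⌊q / a⌋ [ZMOD ⌈b / a⌉ + 1]) : ⌊p / a⌋ = ⌊q / a⌋ := by
  have hpq := floor_div_sub_floor_div_le_ceil ha (abs_le.1 h).2
  have hqp := floor_div_sub_floor_div_le_ceil ha (by linarith [(abs_le.1 h).1] : q - p ≤ b)
  have := Int.eq_zero_of_abs_lt_dvd hmod.symm.dvd (abs_lt.2 ⟨by omega, by omega⟩)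
  omega

lemma sub_mem_Ico_of_floor_div_eq {a x : ℝ} (ha : 0 < a) {k : ℤ} (h : ⌊x / a⌋ = k) :
    x - k * a ∈ Set.Ico 0 a := by
  rw [Int.floor_eq_iff, le_div_iff₀ ha, div_lt_iff₀ ha] at h
  constructor <;> linarith [h.1, h.2]

lemma exists_lt_subset_Icc_of_finite {S : Set ℝ} (hS : S.Finite) {a : ℝ} (ha : 0 < a)
    (h : S ⊆ Set.Ico 0 a) : ∃ a' < a, S ⊆ Set.Icc 0 a' := by
  refine ⟨sSup S, ?_, fun x hx => ⟨(h hx).1, le_csSup hS.bddAbove hx⟩⟩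
  rcases S.eq_empty_or_nonempty with rfl | hne
  · simpa using ha -- `sSup ∅ = 0` in `ℝ`
  · exact (h (hne.csSup_mem hS)).2

section EuclideanSpace

variable {ι : Type*} [Fintype ι]

lemma abs_sub_apply_le_diam {α : Type*} [PseudoMetricSpace α] {S : Set α}
    (hS : Bornology.IsBounded S) {f : α → EuclideanSpace ℝ ι} (hf : Isometry f) (i : ι) {x y : α} (hx : x ∈ S) (hy : y ∈ S) :
    |f x i - f y i| ≤ diam S :=
  calc |f x i - f y i| = dist (f x i) (f y i) := (Real.dist_eq _ _).symm
    _ ≤ dist (f x) (f y) := PiLp.dist_apply_le _ _ i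
    _ = dist x y := hf.dist_eq x y
    _ ≤ diam S := dist_le_diam_of_mem hS hx hy

lemma exists_lt_isometryEquiv_apply_mem_Icc_of_floor_div_eq [DecidableEq ι]
    {X : Set (EuclideanSpace ℝ ι)} (hX : X.Finite) (f : EuclideanSpace ℝ ι ≃ᵢ EuclideanSpace ℝ ι)
    (i : ι) {a : ℝ} (ha : 0 < a) {k : ℤ} (h : ∀ x ∈ X, ⌊f x i / a⌋ = k) :
    ∃ a' < a, ∃ g : EuclideanSpace ℝ ι ≃ᵢ EuclideanSpace ℝ ι, ∀ x ∈ X, g x i ∈ Set.Icc 0 a' := by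
  set g := f.trans (IsometryEquiv.subRight (EuclideanSpace.single i (k * a)))
  have hg : ∀ x ∈ X, g x i ∈ Set.Ico 0 a := fun x hx => by
    simpa [g] using sub_mem_Ico_of_floor_div_eq ha (h x hx)
  obtain ⟨a', ha', hsub⟩ :=
    exists_lt_subset_Icc_of_finite (hX.image fun x => g x i) ha (Set.image_subset_iff.2 hg)
  exact ⟨a', ha', g, fun x hx => hsub ⟨x, hx, rfl⟩⟩

end EuclideanSpace

lemma Finset.exists_ne_map_eq_of_sub_le_card_sub_two {α : Type*} {P : Finset α}
    (hP : P.Nonempty) {φ : α → ℤ} (h : ∀ p ∈ P, ∀ q ∈ P, φ p - φ q ≤ (P.card : ℤ) - 2) :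
    ∃ p ∈ P, ∃ q ∈ P, p ≠ q ∧ φ p = φ q := by
  obtain ⟨p₀, hp₀, hmin⟩ := P.exists_min_image φ hP
  refine exists_ne_map_eq_of_card_lt_of_maps_to
    (t := Finset.Icc (φ p₀) (φ p₀ + P.card - 2)) ?_ fun p hp => ?_
  · rw [Int.card_Icc]
    have := hP.card_pos
    omega
  · simp only [coe_Icc, Set.mem_Icc]
    exact ⟨hmin p hp, by linarith [h p hp p₀ hp₀]⟩

theorem stmt8 (n : ℕ) (hn : 0 < n)
    (X : Set (EuclideanSpace ℝ (Fin n))) (hXfin : X.Finite)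
    (a b : ℝ) (ha : 0 < a) (hdiam : Metric.diam X = b)
    (hBW : (∃ f : EuclideanSpace ℝ (Fin n) ≃ᵢ EuclideanSpace ℝ (Fin n),
        ∀ x ∈ X, f x ⟨0, hn⟩ ∈ Set.Icc (0 : ℝ) a) ∧
      ∀ a' : ℝ, (∃ f : EuclideanSpace ℝ (Fin n) ≃ᵢ EuclideanSpace ℝ (Fin n),
        ∀ x ∈ X, f x ⟨0, hn⟩ ∈ Set.Icc (0 : ℝ) a') → a ≤ a')
    (t : ℕ) (P : Finset (EuclideanSpace ℝ (Fin n))) (hPcard : P.card = t)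
    (hPdiam : Metric.diam (P : Set (EuclideanSpace ℝ (Fin n))) ≤ a * ((t : ℝ) - 2))
    (χ : EuclideanSpace ℝ (Fin n) → ℤ)
    (hχ : ∀ x : EuclideanSpace ℝ (Fin n), χ x = ⌊x ⟨0, hn⟩ / a⌋ % (⌈b / a⌉ + 1)) :
    (¬ ∃ f : EuclideanSpace ℝ (Fin n) ≃ᵢ EuclideanSpace ℝ (Fin n),
        ∀ x ∈ X, ∀ y ∈ X, χ (f x) = χ (f y)) ∧
    (¬ ∃ g : EuclideanSpace ℝ (Fin n) ≃ᵢ EuclideanSpace ℝ (Fin n),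
        ∀ p ∈ P, ∀ q ∈ P, p ≠ q → χ (g p) ≠ χ (g q)) := by
  set i : Fin n := ⟨0, hn⟩
  constructor
  · rintro ⟨f, hf⟩
    have hslab : ∀ x ∈ X, ∀ y ∈ X, ⌊f x i / a⌋ = ⌊f y i / a⌋ := fun x hx y hy =>
      floor_div_eq_of_modEq ha (hdiam ▸ abs_sub_apply_le_diam hXfin.isBounded f.isometry i hx hy)
        (by simpa only [Int.ModEq, hχ] using hf x hx y hy)
    obtain ⟨k, hk⟩ : ∃ k : ℤ, ∀ x ∈ X, ⌊f x i / a⌋ = k := by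
      rcases X.eq_empty_or_nonempty with rfl | ⟨x₀, hx₀⟩
      · exact ⟨0, by simp⟩
      · exact ⟨_, fun x hx => hslab x hx x₀ hx₀⟩
    obtain ⟨a', ha', hfit⟩ := exists_lt_isometryEquiv_apply_mem_Icc_of_floor_div_eq hXfin f i ha hk
    exact (hBW.2 a' hfit).not_gt ha'
  · rintro ⟨g, hg⟩
    have ht : (2 : ℝ) ≤ t := by
      linarith [(mul_nonneg_iff_of_pos_left ha).1 (diam_nonneg.trans hPdiam)]
    have hP : P.Nonempty := Finset.card_pos.1 <| by
      rw [hPcard]; exact_mod_cast (by linarith : (0 : ℝ) < t)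
    obtain ⟨p, hp, q, hq, hpq, hslab⟩ :=
      P.exists_ne_map_eq_of_sub_le_card_sub_two hP (φ := fun p => ⌊g p i / a⌋) fun p hp q hq =>
        calc ⌊g p i / a⌋ - ⌊g q i / a⌋ ≤ ⌈a * ((t : ℝ) - 2) / a⌉ :=
              floor_div_sub_floor_div_le_ceil ha <| (le_abs_self _).trans <|
                (abs_sub_apply_le_diam P.finite_toSet.isBounded g.isometry i hp hq).trans hPdiam
          _ = P.card - 2 := by
              rw [mul_div_cancel_left₀ _ ha.ne', hPcard]
              exact_mod_cast Int.ceil_intCast _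
    exact hg p hp q hq hpq (by rw [hχ, hχ]; exact congrArg (· % _) hslab)
end

section
/- Color the nonnegative reals by χ(y) = ⌊y⌋ mod 4, and color each point x ∈ ℝⁿ by χ(|x|²). Then under this spherical 4-coloring of ℝⁿ there is no monochromatic copy of ℓ₃, i.e., no three collinear points x₁, x₂, x₃ with dist(x₁,x₂) = dist(x₂,x₃) = 1, x₂ = (x₁+x₃)/2, and ⌊|x₁|²⌋ ≡ ⌊|x₂|²⌋ ≡ ⌊|x₃|²⌋ (mod 4). -/
theorem stmt11 (n : ℕ) :
    ¬ ∃ x₁ x₂ x₃ : EuclideanSpace ℝ (Fin n),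
      x₂ = midpoint ℝ x₁ x₃ ∧ dist x₁ x₂ = 1 ∧ dist x₂ x₃ = 1 ∧
      ⌊‖x₁‖ ^ 2⌋ % 4 = ⌊‖x₂‖ ^ 2⌋ % 4 ∧ ⌊‖x₂‖ ^ 2⌋ % 4 = ⌊‖x₃‖ ^ 2⌋ % 4 := by
  rintro ⟨x₁, x₂, x₃, hmid, hd12, hd23, hc1, hc2⟩
  have hsum : x₁ + x₃ = x₂ + x₂ := by
    rw [hmid]
    exact (midpoint_add_self ℝ x₁ x₃).symm
  have hpar : ‖x₂ + (x₁ - x₂)‖ ^ 2 + ‖x₂ - (x₁ - x₂)‖ ^ 2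
      = 2 * (‖x₂‖ ^ 2 + ‖x₁ - x₂‖ ^ 2) := by
    have := parallelogram_law_with_norm ℝ x₂ (x₁ - x₂)
    nlinarith [this]
  have h1 : x₂ + (x₁ - x₂) = x₁ := by abel
  have h3 : x₂ - (x₁ - x₂) = x₃ := by
    have : x₂ + x₂ - x₁ = x₃ := by rw [← hsum]; abel
    rw [← this]; abel
  have hn12 : ‖x₁ - x₂‖ = 1 := by rw [← dist_eq_norm]; exact hd12
  rw [h1, h3, hn12] at hpar
  -- hpar : ‖x₁‖^2 + ‖x₃‖^2 = 2 * (‖x₂‖^2 + 1)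
  set a := ‖x₁‖ ^ 2 with ha
  set b := ‖x₂‖ ^ 2 with hb
  set c := ‖x₃‖ ^ 2 with hc
  have fa1 : (⌊a⌋ : ℝ) ≤ a := Int.floor_le a
  have fa2 : a < ⌊a⌋ + 1 := Int.lt_floor_add_one a
  have fb1 : (⌊b⌋ : ℝ) ≤ b := Int.floor_le b
  have fb2 : b < ⌊b⌋ + 1 := Int.lt_floor_add_one b
  have fc1 : (⌊c⌋ : ℝ) ≤ c := Int.floor_le c
  have fc2 : c < ⌊c⌋ + 1 := Int.lt_floor_add_one c
  have hlo : 2 * ⌊b⌋ < ⌊a⌋ + ⌊c⌋ := by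
    have : (2 * ⌊b⌋ : ℝ) < ⌊a⌋ + ⌊c⌋ := by nlinarith
    exact_mod_cast this
  have hhi : ⌊a⌋ + ⌊c⌋ < 2 * ⌊b⌋ + 4 := by
    have : ((⌊a⌋ : ℝ) + ⌊c⌋) < 2 * ⌊b⌋ + 4 := by nlinarith
    exact_mod_cast this
  omega
end

section
/- Suppose y₁, y₂, y₃ ≥ 0 satisfy y₁ + y₃ = 2y₂ + 2 and √y₂ ≥ 2·max{|y₁ − y₂|, |y₂ − y₃|, 1}. Then for every n ≥ 2 there exist three points x₁, x₂, x₃ ∈ ℝⁿ forming a copy of ℓ₃ (collinear, consecutive distances 1) with |xᵢ|² = yᵢ for i = 1, 2, 3. -/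
/-! A potential triple is realized by `x₂ = √y₂ • u` and `x₁, x₃ = x₂ ∓ d` for a unit vector `d`:
then `‖x₁‖² = y₂ - 2⟪x₂, d⟫ + 1` and `‖x₃‖² = y₂ + 2⟪x₂, d⟫ + 1`, so everything reduces to
choosing `d` with `⟪x₂, d⟫ = (y₂ + 1 - y₁) / 2`. Tilting `u` towards an orthogonal unit vector
produces every value of `⟪x₂, d⟫` in `[-√y₂, √y₂]`, and the hypothesis `√y₂ ≥ 2 max{…}` puts
`(y₂ + 1 - y₁) / 2` well inside this interval. -/

open RealInnerProductSpace

variable {E : Type*} [NormedAddCommGroup E] [InnerProductSpace ℝ E]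

theorem norm_smul_add_sqrt_one_sub_sq_smul {u v : E} (hu : ‖u‖ = 1) (hv : ‖v‖ = 1)
    (huv : ⟪u, v⟫ = 0) {c : ℝ} (hc : c ^ 2 ≤ 1) : ‖c • u + √(1 - c ^ 2) • v‖ = 1 := by
  have horth : ⟪c • u, √(1 - c ^ 2) • v⟫ = 0 := by
    rw [inner_smul_left, inner_smul_right, huv]; simp
  rw [norm_add_eq_sqrt_iff_real_inner_eq_zero.mpr horth, norm_smul, norm_smul, hu, hv,
    Real.norm_eq_abs, Real.norm_eq_abs, abs_of_nonneg (Real.sqrt_nonneg _), mul_one, mul_one,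
    Real.mul_self_sqrt (sub_nonneg.mpr hc), abs_mul_abs_self]
  ring_nf
  exact Real.sqrt_one

theorem exists_norm_eq_one_inner_eq {p v : E} (hv : ‖v‖ = 1) (hpv : ⟪p, v⟫ = 0) {r : ℝ}
    (hr : |r| ≤ ‖p‖) : ∃ d : E, ‖d‖ = 1 ∧ ⟪p, d⟫ = r := by
  rcases eq_or_ne p 0 with rfl | hp
  · exact ⟨v, hv, by simpa using (abs_nonpos_iff.mp (by simpa using hr)).symm⟩
  have hp' : 0 < ‖p‖ := norm_pos_iff.mpr hp
  set c := r / ‖p‖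
  have hc : c ^ 2 ≤ 1 := by
    rw [div_pow, div_le_one (by positivity), ← sq_abs r]
    exact pow_le_pow_left₀ (abs_nonneg r) hr 2
  have hw : ‖‖p‖⁻¹ • p‖ = 1 := norm_smul_inv_norm hp
  have hwv : ⟪‖p‖⁻¹ • p, v⟫ = 0 := by rw [inner_smul_left, hpv, mul_zero]
  refine ⟨c • ‖p‖⁻¹ • p + √(1 - c ^ 2) • v, norm_smul_add_sqrt_one_sub_sq_smul hw hv hwv hc, ?_⟩
  rw [inner_add_right, inner_smul_right, inner_smul_right, inner_smul_right, hpv,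
    real_inner_self_eq_norm_sq, mul_zero, add_zero]
  field_simp
  exact div_mul_cancel₀ r hp'.ne'

theorem exists_ell3_of_abs_le_two_sqrt {u v : E} (hu : ‖u‖ = 1) (hv : ‖v‖ = 1)
    (huv : ⟪u, v⟫ = 0) {y₁ y₂ y₃ : ℝ} (h2 : 0 ≤ y₂) (hsum : y₁ + y₃ = 2 * y₂ + 2)
    (hy : |y₂ + 1 - y₁| ≤ 2 * √y₂) :
    ∃ x₁ x₂ x₃ : E, x₂ = midpoint ℝ x₁ x₃ ∧ dist x₁ x₂ = 1 ∧ dist x₂ x₃ = 1 ∧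
      ‖x₁‖ ^ 2 = y₁ ∧ ‖x₂‖ ^ 2 = y₂ ∧ ‖x₃‖ ^ 2 = y₃ := by
  set p := √y₂ • u
  have hp : ‖p‖ = √y₂ := by simp [p, norm_smul, hu]
  have hpv : ⟪p, v⟫ = 0 := by simp [p, inner_smul_left, huv]
  obtain ⟨d, hd, hpd⟩ := exists_norm_eq_one_inner_eq hv hpv (r := (y₂ + 1 - y₁) / 2)
    (by rw [abs_div, abs_two, hp]; linarith)
  have hp2 : ‖p‖ ^ 2 = y₂ := by rw [hp, Real.sq_sqrt h2]
  refine ⟨p - d, p, p + d, (midpoint_sub_add ℝ p d).symm, by simp [hd],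
    by simp [hd], ?_, hp2, ?_⟩
  · rw [norm_sub_sq_real, hpd, hp2, hd]; ring
  · rw [norm_add_sq_real, hpd, hp2, hd]; linarith

theorem stmt12_general (y₁ y₂ y₃ : ℝ)
    (hsum : y₁ + y₃ = 2 * y₂ + 2)
    (hbig : 2 * max (max |y₁ - y₂| |y₂ - y₃|) 1 ≤ Real.sqrt y₂) :
    ∀ n : ℕ, 2 ≤ n → ∃ x₁ x₂ x₃ : EuclideanSpace ℝ (Fin n),
      x₂ = midpoint ℝ x₁ x₃ ∧ dist x₁ x₂ = 1 ∧ dist x₂ x₃ = 1 ∧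
      ‖x₁‖ ^ 2 = y₁ ∧ ‖x₂‖ ^ 2 = y₂ ∧ ‖x₃‖ ^ 2 = y₃ := by
  intro n hn
  have hsqrt : 2 ≤ √y₂ := by linarith [le_max_right (max |y₁ - y₂| |y₂ - y₃|) 1]
  have hy₁ : |y₁ - y₂| ≤ √y₂ / 2 := by
    linarith [le_max_left |y₁ - y₂| |y₂ - y₃|, le_max_left (max |y₁ - y₂| |y₂ - y₃|) 1]
  have hy : |y₂ + 1 - y₁| ≤ 2 * √y₂ := by
    rw [abs_le] at hy₁ ⊢
    constructor <;> linarith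
  have hb := (EuclideanSpace.basisFun (Fin n) ℝ).orthonormal
  have h01 : (⟨0, by omega⟩ : Fin n) ≠ ⟨1, by omega⟩ := by simp
  exact exists_ell3_of_abs_le_two_sqrt (hb.1 _) (hb.1 _) (hb.2 h01)
    (Real.sqrt_pos.mp (by linarith)).le hsum hy

theorem stmt12 (y₁ y₂ y₃ : ℝ) (h1 : 0 ≤ y₁) (h2 : 0 ≤ y₂) (h3 : 0 ≤ y₃)
    (hsum : y₁ + y₃ = 2 * y₂ + 2)
    (hbig : 2 * max (max |y₁ - y₂| |y₂ - y₃|) 1 ≤ Real.sqrt y₂) :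
    ∀ n : ℕ, 2 ≤ n → ∃ x₁ x₂ x₃ : EuclideanSpace ℝ (Fin n),
      x₂ = midpoint ℝ x₁ x₃ ∧ dist x₁ x₂ = 1 ∧ dist x₂ x₃ = 1 ∧
      ‖x₁‖ ^ 2 = y₁ ∧ ‖x₂‖ ^ 2 = y₂ ∧ ‖x₃‖ ^ 2 = y₃ :=
  stmt12_general y₁ y₂ y₃ hsum hbig
end

section
/- Let χ : ℝ≥0 → C be a coloring of the nonnegative reals such that no potential triple is rainbow and no potential triple is monochromatic, where a triple (y₁,y₂,y₃) is potential if y₁ + y₃ = 2y₂ + 2 and √y₂ ≥ 2·max{|y₁−y₂|, |y₂−y₃|, 1}. Then for all sufficiently large real N and all integers M ≥ N, one has χ(M) = χ(N + ((M − N) mod 3)); i.e., χ restricted to integers ≥ N is periodic with period 3 and takes three pairwise distinct values χ(N), χ(N+1), χ(N+2). -/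
theorem stmt13 (C : Type*) (χ : ℝ → C)
    (hrb : ∀ y₁ y₂ y₃ : ℝ, 0 ≤ y₁ → 0 ≤ y₂ → 0 ≤ y₃ →
      y₁ + y₃ = 2 * y₂ + 2 → 2 * max (max |y₁ - y₂| |y₂ - y₃|) 1 ≤ Real.sqrt y₂ →
      ¬(χ y₁ ≠ χ y₂ ∧ χ y₁ ≠ χ y₃ ∧ χ y₂ ≠ χ y₃))
    (hmono : ∀ y₁ y₂ y₃ : ℝ, 0 ≤ y₁ → 0 ≤ y₂ → 0 ≤ y₃ →
      y₁ + y₃ = 2 * y₂ + 2 → 2 * max (max |y₁ - y₂| |y₂ - y₃|) 1 ≤ Real.sqrt y₂ →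
      ¬(χ y₁ = χ y₂ ∧ χ y₂ = χ y₃)) :
    ∃ N₀ : ℝ, ∀ N : ℤ, N₀ ≤ (N : ℝ) →
      (∀ M : ℤ, N ≤ M → χ (M : ℝ) = χ ((N + (M - N) % 3 : ℤ) : ℝ)) ∧
      χ (N : ℝ) ≠ χ ((N + 1 : ℤ) : ℝ) ∧ χ (N : ℝ) ≠ χ ((N + 2 : ℤ) : ℝ) ∧
      χ ((N + 1 : ℤ) : ℝ) ≠ χ ((N + 2 : ℤ) : ℝ) := by
  have hsqrt : ∀ x : ℝ, 25 ≤ x → (5:ℝ) ≤ Real.sqrt x := by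
    intro x hx
    have h := Real.sqrt_le_sqrt hx
    rwa [show (25:ℝ) = 5^2 by norm_num, Real.sqrt_sq (by norm_num : (0:ℝ) ≤ 5)] at h
  -- adjacent differ
  have A : ∀ x : ℝ, 25 ≤ x → χ x ≠ χ (x+1) := by
    intro x hx h
    refine hmono (x+1) x (x+1) (by linarith) (by linarith) (by linarith) (by ring) ?_ ⟨h.symm, h⟩
    have h5 := hsqrt x hx
    have e1 : |x+1-x| = 1 := by rw [show x+1-x = (1:ℝ) by ring, abs_one]
    have e2 : |x-(x+1)| = 1 := by rw [show x-(x+1) = (-1:ℝ) by ring, abs_neg, abs_one]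
    rw [e1, e2]
    simp only [max_self]
    linarith
  -- distance 2 differ
  have B : ∀ x : ℝ, 25 ≤ x → χ x ≠ χ (x+2) := by
    intro x hx h
    refine hmono x x (x+2) (by linarith) (by linarith) (by linarith) (by ring) ?_ ⟨rfl, h⟩
    have h5 := hsqrt x hx
    have e1 : |x-x| = 0 := by simp
    have e2 : |x-(x+2)| = 2 := by rw [show x-(x+2) = (-2:ℝ) by ring, abs_neg]; norm_num
    rw [e1, e2]
    rw [show max (max (0:ℝ) 2) 1 = 2 by norm_num]
    linarith
  -- period 3
  have Cc : ∀ x : ℝ, 25 ≤ x → χ x = χ (x+3) := by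
    intro x hx
    by_contra h
    have h5 : (5:ℝ) ≤ Real.sqrt (x + 1/2) := hsqrt _ (by linarith)
    -- half point color
    have hhalf : χ (x+1/2) = χ (x+1) ∨ χ (x+1/2) = χ (x+2) := by
      by_contra hc
      push_neg at hc
      refine hrb (x+1) (x+1/2) (x+2) (by linarith) (by linarith) (by linarith) (by ring) ?_
        ⟨fun he => hc.1 he.symm, ?_, fun he => hc.2 he⟩
      · have e1 : |x+1-(x+1/2)| = 1/2 := by
          rw [show x+1-(x+1/2) = (1/2:ℝ) by ring]; norm_num
        have e2 : |x+1/2-(x+2)| = 3/2 := by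
          rw [show x+1/2-(x+2) = (-(3/2):ℝ) by ring, abs_neg]; norm_num
        rw [e1, e2, show max (max (1/2:ℝ) (3/2)) 1 = 3/2 by norm_num]
        linarith
      · have := A (x+1) (by linarith)
        rwa [show x+1+1 = x+2 by ring] at this
    have hnr := hrb x (x+1/2) (x+3) (by linarith) (by linarith) (by linarith) (by ring) (by
      have e1 : |x-(x+1/2)| = 1/2 := by
        rw [show x-(x+1/2) = (-(1/2):ℝ) by ring, abs_neg]; norm_num
      have e2 : |x+1/2-(x+3)| = 5/2 := by
        rw [show x+1/2-(x+3) = (-(5/2):ℝ) by ring, abs_neg]; norm_num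
      rw [e1, e2, show max (max (1/2:ℝ) (5/2)) 1 = 5/2 by norm_num]
      linarith)
    have hx1 : χ x ≠ χ (x+1) := A x hx
    have hx2 : χ x ≠ χ (x+2) := B x hx
    have hx13 : χ (x+1) ≠ χ (x+3) := by
      have := B (x+1) (by linarith); rwa [show x+1+2 = x+3 by ring] at this
    have hx23 : χ (x+2) ≠ χ (x+3) := by
      have := A (x+2) (by linarith); rwa [show x+2+1 = x+3 by ring] at this
    apply hnr
    rcases hhalf with hh | hh
    · exact ⟨fun he => hx1 (he.trans hh), h, fun he => hx13 (hh.symm.trans he)⟩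
    · exact ⟨fun he => hx2 (he.trans hh), h, fun he => hx23 (hh.symm.trans he)⟩
  refine ⟨25, fun N hN => ?_⟩
  have hNA : χ (N : ℝ) ≠ χ ((N + 1 : ℤ) : ℝ) := by
    have := A N hN; push_cast; convert this using 2 <;> push_cast <;> ring
  constructor
  · -- periodicity
    have key : ∀ k : ℕ, χ ((N + k : ℤ) : ℝ) = χ ((N + (k : ℤ) % 3 : ℤ) : ℝ) := by
      intro k
      induction k using Nat.strong_induction_on with
      | _ k ih =>
        rcases lt_or_ge k 3 with hk | hk
        · have : (k : ℤ) % 3 = (k : ℤ) := Int.emod_eq_of_lt (by positivity) (by exact_mod_cast hk)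
          rw [this]
        · obtain ⟨j, rfl⟩ := Nat.exists_eq_add_of_le hk
          have step : χ ((N + j : ℤ) : ℝ) = χ ((N + (3 + j : ℕ) : ℤ) : ℝ) := by
            have := Cc ((N + j : ℤ) : ℝ) (by
              push_cast
              have h0 : (0:ℝ) ≤ (j:ℝ) := Nat.cast_nonneg j
              linarith)
            rw [this]; congr 1; push_cast; ring
          rw [← step, ih j (by omega)]
          congr 2
          omega
    intro M hM
    have hM' : (M : ℤ) = N + ((M - N).toNat : ℕ) := by omega
    rw [hM', key]
    congr 3
    omega
  refine ⟨hNA, ?_, ?_⟩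
  · have := B N hN; push_cast; convert this using 2 <;> push_cast <;> ring
  · have := A ((N:ℝ)+1) (by linarith)
    push_cast
    convert this using 2 <;> push_cast <;> ring
end

section
/- Let n ≥ 2, h > 0, and suppose the configuration X ⊆ ℝⁿ has the property that every 2-coloring of any (n−2)-dimensional sphere of radius h in ℝⁿ contains a monochromatic isometric copy of X. Let T_h be a triangle with a height equal to h (i.e., three points a, b, c with the distance from c to line ab equal to h). Then for every coloring of ℝⁿ with any number of colors, there is a monochromatic copy of X or a rainbow copy of T_h. -/
/-!
Suppose no copy of the triangle `p q r` is rainbow. If `χ` gives the same colour to any two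
points at distance `d = dist p q`, it is locally constant (in dimension at least two, points
closer than `2 d` have a common point at distance `d` from both) and hence constant. Otherwise
pick `A`, `B` at distance `d` with different colours. Rotating the triangle about the line `AB`,
with `p ↦ A` and `q ↦ B`, carries `r` to every point of the `(n - 2)`-sphere of radius `h`
around the foot of the height, orthogonal to `AB`; since no image is rainbow, that sphere only
uses the colours of `A` and `B`. A monochromatic copy of `X` for the 2-colouring
"same colour as `A`" of this sphere is then monochromatic for `χ`.
-/

open Metric AffineMap
open scoped RealInnerProductSpace

section

variable {E : Type*} [NormedAddCommGroup E] [InnerProductSpace ℝ E]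

theorem exists_linearIsometryEquiv_map_orthogonal_pair {x y x' y' : E}
    (hx : ‖x‖ = ‖x'‖) (hy : ‖y‖ = ‖y'‖) (hxy : ⟪x, y⟫ = 0) (hxy' : ⟪x', y'⟫ = 0) :
    ∃ L : E ≃ₗᵢ[ℝ] E, L x = x' ∧ L y = y' := by
  set R₁ := Submodule.reflection (ℝ ∙ (x - x'))ᗮ
  have hR₁x : R₁ x = x' := Submodule.reflection_sub hx
  set R₂ := Submodule.reflection (ℝ ∙ (R₁ y - y'))ᗮ
  have hR₂y : R₂ (R₁ y) = y' := Submodule.reflection_sub (by rw [R₁.norm_map, hy])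
  have hx'_mem : x' ∈ (ℝ ∙ (R₁ y - y'))ᗮ := by
    rw [Submodule.mem_orthogonal_singleton_iff_inner_left, inner_sub_right, ← hR₁x,
      R₁.inner_map_map, hxy, hR₁x, hxy', sub_zero]
  refine ⟨R₁.trans R₂, ?_, hR₂y⟩
  rw [LinearIsometryEquiv.trans_apply, hR₁x]
  exact Submodule.reflection_mem_subspace_eq_self hx'_mem

theorem exists_inner_eq_zero_norm_eq (hE : 1 < Module.rank ℝ E) (v : E) {s : ℝ} (hs : 0 ≤ s) :
    ∃ w : E, ⟪v, w⟫ = 0 ∧ ‖w‖ = s := by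
  obtain ⟨w, hw, hw0⟩ : ∃ w ∈ (ℝ ∙ v)ᗮ, w ≠ 0 := by
    by_contra! h
    have hspan : ℝ ∙ v = ⊤ :=
      Submodule.orthogonal_eq_bot_iff.mp ((Submodule.eq_bot_iff _).mpr h)
    have := rank_span_le (R := ℝ) ({v} : Set E)
    rw [hspan, rank_top, Cardinal.mk_singleton] at this
    exact hE.not_ge (by exact_mod_cast this)
  refine ⟨(s / ‖w‖) • w, ?_, ?_⟩
  · rw [real_inner_smul_right, Submodule.mem_orthogonal_singleton_iff_inner_right.mp hw, mul_zero]
  · rw [norm_smul, Real.norm_of_nonneg (by positivity),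
      div_mul_cancel₀ _ (norm_ne_zero_iff.mpr hw0)]

theorem exists_dist_eq_dist_eq_of_dist_le (hE : 1 < Module.rank ℝ E) {b y : E} {d : ℝ}
    (hby : dist b y ≤ 2 * d) : ∃ z, dist b z = d ∧ dist z y = d := by
  have hd : 0 ≤ d := by linarith [dist_nonneg (x := b) (y := y)]
  set m : E := (2⁻¹ : ℝ) • (y - b)
  have hm : ‖m‖ = dist b y / 2 := by
    rw [norm_smul, ← dist_eq_norm']
    norm_num
    ring
  obtain ⟨w, hmw, hw⟩ := exists_inner_eq_zero_norm_eq hE m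
    (Real.sqrt_nonneg (d ^ 2 - (dist b y / 2) ^ 2))
  have hw2 : ‖w‖ ^ 2 = d ^ 2 - ‖m‖ ^ 2 := by
    rw [hw, Real.sq_sqrt, hm]
    nlinarith [dist_nonneg (x := b) (y := y)]
  refine ⟨b + (m + w), ?_, ?_⟩
  · rw [← sq_eq_sq₀ dist_nonneg hd, dist_comm, dist_eq_norm, add_sub_cancel_left,
      norm_add_sq_real, hmw, hw2]
    ring
  · rw [← sq_eq_sq₀ dist_nonneg hd, dist_eq_norm,
      show b + (m + w) - y = w - m by simp only [m]; module, norm_sub_sq_real, real_inner_comm, hmw,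
      hw2]
    ring

theorem apply_eq_of_forall_dist_eq_apply_eq {C : Type*} (hE : 1 < Module.rank ℝ E) {d : ℝ}
    (hd : 0 < d) {χ : E → C} (hχ : ∀ a b, dist a b = d → χ a = χ b) (x y : E) : χ x = χ y := by
  have hloc : IsLocallyConstant χ := by
    refine (IsLocallyConstant.iff_eventually_eq χ).mpr fun x => ?_
    filter_upwards [ball_mem_nhds x (by positivity : (0 : ℝ) < 2 * d)] with y hy
    obtain ⟨z, hyz, hzx⟩ := exists_dist_eq_dist_eq_of_dist_le hE (le_of_lt hy)
    rw [hχ y z hyz, hχ z x hzx]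
  exact hloc.apply_eq_of_preconnectedSpace x y

theorem exists_lineMap_inner_eq_zero_dist_eq_infDist (p q r : E) :
    ∃ t : ℝ, ⟪q - p, r - lineMap p q t⟫ = 0 ∧
      dist r (lineMap p q t) = infDist r (affineSpan ℝ {p, q} : Set E) := by
  set s := affineSpan ℝ ({p, q} : Set E)
  have : Nonempty s := ⟨⟨p, left_mem_affineSpan_pair ℝ p q⟩⟩
  obtain ⟨t, ht⟩ := mem_affineSpan_pair_iff_exists_lineMap_eq.mp
    (EuclideanGeometry.orthogonalProjection_mem (s := s) r)
  refine ⟨t, ?_, ?_⟩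
  · rw [ht]
    refine Submodule.inner_right_of_mem_orthogonal ?_
      (EuclideanGeometry.vsub_orthogonalProjection_mem_direction_orthogonal s r)
    rw [direction_affineSpan]
    exact vsub_rev_mem_vectorSpan_pair ℝ p q
  · rw [ht, EuclideanGeometry.dist_orthogonalProjection_eq_infDist]

theorem exists_isometryEquiv_of_lineMap_foot {p q r A B z : E} {t : ℝ}
    (hr : ⟪q - p, r - lineMap p q t⟫ = 0) (hz : ⟪B - A, z - lineMap A B t⟫ = 0)
    (hAB : dist A B = dist p q) (hzr : dist z (lineMap A B t) = dist r (lineMap p q t)) :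
    ∃ g : E ≃ᵢ E, g p = A ∧ g q = B ∧ g r = z := by
  obtain ⟨L, hLx, hLy⟩ := exists_linearIsometryEquiv_map_orthogonal_pair
    (by rwa [← dist_eq_norm', ← dist_eq_norm', eq_comm])
    (by rwa [← dist_eq_norm, ← dist_eq_norm, eq_comm]) hr hz
  set g : E ≃ᵢ E := ((IsometryEquiv.subRight (lineMap p q t)).trans L.toIsometryEquiv).trans
    (IsometryEquiv.addLeft (lineMap A B t))
  have hg : ∀ x, g x = lineMap A B t + L (x - lineMap p q t) := fun _ => rfl
  refine ⟨g, ?_, ?_, ?_⟩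
  · rw [hg, show p - lineMap p q t = (-t) • (q - p) by rw [lineMap_apply_module']; module,
      L.map_smul, hLx, lineMap_apply_module']
    module
  · rw [hg, show q - lineMap p q t = (1 - t) • (q - p) by rw [lineMap_apply_module']; module,
      L.map_smul, hLx, lineMap_apply_module']
    module
  · rw [hg, hLy, add_sub_cancel]

theorem apply_eq_or_apply_eq_of_not_rainbow {C : Type*} {χ : E → C} {p q r A B z : E} {t : ℝ}
    (hrainbow : ∀ g : E ≃ᵢ E, χ (g p) ≠ χ (g q) → χ (g p) ≠ χ (g r) → χ (g q) = χ (g r))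
    (hr : ⟪q - p, r - lineMap p q t⟫ = 0) (hAB : dist A B = dist p q) (hχAB : χ A ≠ χ B)
    (hz : ⟪B - A, z - lineMap A B t⟫ = 0) (hzr : dist z (lineMap A B t) = dist r (lineMap p q t)) :
    χ z = χ A ∨ χ z = χ B := by
  obtain ⟨g, hgp, hgq, hgr⟩ := exists_isometryEquiv_of_lineMap_foot hr hz hAB hzr
  have hg := hrainbow g
  rw [hgp, hgq, hgr] at hg
  by_cases hzA : χ z = χ A
  · exact Or.inl hzA
  · exact Or.inr (hg hχAB (Ne.symm hzA)).symm

end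

theorem stmt14_general (n : ℕ) (hn : 2 ≤ n) (h : ℝ)
    (X : Set (EuclideanSpace ℝ (Fin n)))
    (hX : ∀ c u : EuclideanSpace ℝ (Fin n), ‖u‖ = 1 →
      ∀ κ : EuclideanSpace ℝ (Fin n) → Bool,
        ∃ f : EuclideanSpace ℝ (Fin n) ≃ᵢ EuclideanSpace ℝ (Fin n),
          (∀ x ∈ X, dist (f x) c = h ∧ (inner ℝ (f x - c) u : ℝ) = 0) ∧
          ∀ x ∈ X, ∀ y ∈ X, κ (f x) = κ (f y))
    (p q r : EuclideanSpace ℝ (Fin n)) (hpq : p ≠ q)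
    (hht : Metric.infDist r (affineSpan ℝ ({p, q} : Set (EuclideanSpace ℝ (Fin n))) :
      Set (EuclideanSpace ℝ (Fin n))) = h)
    (C : Type*) (χ : EuclideanSpace ℝ (Fin n) → C) :
    (∃ f : EuclideanSpace ℝ (Fin n) ≃ᵢ EuclideanSpace ℝ (Fin n),
        ∀ x ∈ X, ∀ y ∈ X, χ (f x) = χ (f y)) ∨
    (∃ f : EuclideanSpace ℝ (Fin n) ≃ᵢ EuclideanSpace ℝ (Fin n),
        χ (f p) ≠ χ (f q) ∧ χ (f p) ≠ χ (f r) ∧ χ (f q) ≠ χ (f r)) := by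
  by_cases hrainbow : ∃ f : EuclideanSpace ℝ (Fin n) ≃ᵢ EuclideanSpace ℝ (Fin n),
      χ (f p) ≠ χ (f q) ∧ χ (f p) ≠ χ (f r) ∧ χ (f q) ≠ χ (f r)
  · exact Or.inr hrainbow
  push Not at hrainbow
  left
  have hrank : 1 < Module.rank ℝ (EuclideanSpace ℝ (Fin n)) := by
    rw [← Module.finrank_eq_rank, finrank_euclideanSpace_fin]
    exact_mod_cast hn
  obtain ⟨t, hr, hrh⟩ := exists_lineMap_inner_eq_zero_dist_eq_infDist p q r
  by_cases hconst : ∀ A B, dist A B = dist p q → χ A = χ B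
  · exact ⟨IsometryEquiv.refl _, fun x _ y _ =>
      apply_eq_of_forall_dist_eq_apply_eq hrank (dist_pos.mpr hpq) hconst _ _⟩
  push Not at hconst
  obtain ⟨A, B, hAB, hχAB⟩ := hconst
  have hBA : B - A ≠ 0 := sub_ne_zero.mpr fun hBA => hχAB (by rw [hBA])
  classical
  obtain ⟨f, hfX, hfχ⟩ := hX (lineMap A B t) (‖B - A‖⁻¹ • (B - A)) (norm_smul_inv_norm hBA)
    (fun x => decide (χ x = χ A))
  have htwo : ∀ x ∈ X, χ (f x) = χ A ∨ χ (f x) = χ B := by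
    intro x hx
    have horth := (hfX x hx).2
    rw [real_inner_smul_right, mul_eq_zero, real_inner_comm] at horth
    exact apply_eq_or_apply_eq_of_not_rainbow hrainbow hr hAB hχAB
      (horth.resolve_left (inv_ne_zero (norm_ne_zero_iff.mpr hBA)))
      (by rw [(hfX x hx).1, hrh, hht])
  refine ⟨f, fun x hx y hy => ?_⟩
  have hsame := hfχ x hx y hy
  rcases htwo x hx with hxA | hxB <;> rcases htwo y hy with hyA | hyB <;> simp_all

theorem stmt14 (n : ℕ) (hn : 2 ≤ n) (h : ℝ) (hh : 0 < h)
    (X : Set (EuclideanSpace ℝ (Fin n)))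
    (hX : ∀ c u : EuclideanSpace ℝ (Fin n), ‖u‖ = 1 →
      ∀ κ : EuclideanSpace ℝ (Fin n) → Bool,
        ∃ f : EuclideanSpace ℝ (Fin n) ≃ᵢ EuclideanSpace ℝ (Fin n),
          (∀ x ∈ X, dist (f x) c = h ∧ (inner ℝ (f x - c) u : ℝ) = 0) ∧
          ∀ x ∈ X, ∀ y ∈ X, κ (f x) = κ (f y))
    (p q r : EuclideanSpace ℝ (Fin n)) (hpq : p ≠ q)
    (hht : Metric.infDist r (affineSpan ℝ ({p, q} : Set (EuclideanSpace ℝ (Fin n))) :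
      Set (EuclideanSpace ℝ (Fin n))) = h)
    (C : Type*) (χ : EuclideanSpace ℝ (Fin n) → C) :
    (∃ f : EuclideanSpace ℝ (Fin n) ≃ᵢ EuclideanSpace ℝ (Fin n),
        ∀ x ∈ X, ∀ y ∈ X, χ (f x) = χ (f y)) ∨
    (∃ f : EuclideanSpace ℝ (Fin n) ≃ᵢ EuclideanSpace ℝ (Fin n),
        χ (f p) ≠ χ (f q) ∧ χ (f p) ≠ χ (f r) ∧ χ (f q) ≠ χ (f r)) :=
  stmt14_general n hn h X hX p q r hpq hht C χ
end
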